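/- Let H_{1,n}(k) = Σ_{j=0}^{n} C(n,j)·C(k+n−j, n) and H_{2,n}(k) be the polynomial whose generating function is Σ_{k≥0} H_{2,n}(k) t^k = (1+t)^{n−1}(1+2nt+t²)/(1−t)^{n+2}. Then for all n ≥ 1 the identity H_{2,n}(k) = (1/2)(2k+1)·H_{1,n}(k) + (1/2)·H_{1,n−1}(k) holds as polynomials in k. -/

import Mathlib

/-!
With `A(t) = ∑ H_{1,n}(k) tᵏ = (1 + t)ⁿ / (1 - t)ⁿ⁺¹`, the series of `(2k + 1) H_{1,n}(k)`
is `2tA' + A`, and differentiating `A · (1 - t)ⁿ⁺¹ = (1 + t)ⁿ` expresses `tA' · (1 - t)ⁿ⁺²`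
as a polynomial. So both sides of the claimed identity, multiplied by `(1 - t)ⁿ⁺²`, are the same
polynomial, and `(1 - t)ⁿ⁺²` is a unit of `ℚ⟦t⟧`.
-/

open PowerSeries

/-- `H_{1,n}(k) = ∑_{j=0}^{n} C(n,j) C(k+n-j, n)`. -/
def H1 (n k : ℕ) : ℕ := ∑ j ∈ Finset.range (n + 1), n.choose j * (k + n - j).choose n

namespace PowerSeries

variable {R : Type*} [CommRing R]

theorem mk_choose_add_sub_eq_X_pow_mul {d j : ℕ} (hj : j ≤ d) :
    (mk fun k => ((k + d - j).choose d : R)) = X ^ j * mk fun k => ((d + k).choose d : R) := by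
  ext k
  rw [coeff_mk, coeff_X_pow_mul', coeff_mk]
  split_ifs with h
  · congr 2; omega
  · rw [Nat.choose_eq_zero_of_lt (by omega), Nat.cast_zero]

theorem coeff_X_mul_derivative (f : R⟦X⟧) (k : ℕ) :
    coeff k (X * d⁄dX R f) = k * coeff k f := by
  rcases k with _ | k
  · simp
  · rw [coeff_succ_X_mul, coeff_derivative]
    push_cast
    ring

theorem X_mul_derivative_mul_one_sub_pow {A P : R⟦X⟧} {d : ℕ}
    (h : A * (1 - X) ^ (d + 1) = P) :
    X * d⁄dX R A * (1 - X) ^ (d + 2) = X * (((d : R⟦X⟧) + 1) * P + (1 - X) * d⁄dX R P) := by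
  have hderiv := congrArg (d⁄dX R) h
  simp only [Derivation.leibniz, derivative_pow, smul_eq_mul, map_sub, derivative_one,
    derivative_X, Nat.add_sub_cancel] at hderiv
  push_cast at hderiv
  linear_combination X * (1 - X) * hderiv + (d + 1) * X * h

end PowerSeries

theorem mk_H1_mul_one_sub_pow (R : Type*) [CommRing R] (n : ℕ) :
    (mk fun k => (H1 n k : R)) * (1 - X) ^ (n + 1) = (1 + X) ^ n := by
  have hsum : (mk fun k => (H1 n k : R)) = ∑ j ∈ Finset.range (n + 1),
      (n.choose j : R⟦X⟧) * X ^ j * mk fun k => ((n + k).choose n : R) := by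
    ext k
    simp only [H1, Nat.cast_sum, Nat.cast_mul, coeff_mk, map_sum]
    refine Finset.sum_congr rfl fun j hj => ?_
    rw [mul_assoc, ← mk_choose_add_sub_eq_X_pow_mul (Finset.mem_range_succ_iff.mp hj),
      ← map_natCast (C (R := R)), coeff_C_mul, coeff_mk]
  rw [hsum, ← Finset.sum_mul, mul_assoc, mk_add_choose_mul_one_sub_pow_eq_one, mul_one,
    add_comm (1 : R⟦X⟧), add_pow]
  exact Finset.sum_congr rfl fun _ _ => by ring

theorem H2n_relation_one (n : ℕ) (hn : 1 ≤ n) (H2 : Polynomial ℚ)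
    (hH2 : (PowerSeries.mk fun k => H2.eval (k : ℚ)) * (1 - PowerSeries.X) ^ (n + 2)
        = (1 + PowerSeries.X) ^ (n - 1)
          * (1 + 2 * (n : ℚ) • PowerSeries.X + PowerSeries.X ^ 2)) :
    ∀ k : ℕ,
      H2.eval (k : ℚ)
        = (1/2 : ℚ) * (2 * k + 1) * (H1 n k : ℚ) + (1/2 : ℚ) * (H1 (n - 1) k : ℚ) := by
  obtain ⟨m, rfl⟩ : ∃ m, n = m + 1 := ⟨n - 1, by omega⟩
  rw [Nat.add_sub_cancel, smul_eq_C_mul, map_natCast] at hH2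
  simp only [Nat.add_sub_cancel]
  set A : ℚ⟦X⟧ := mk fun k => (H1 (m + 1) k : ℚ)
  set F : ℚ⟦X⟧ := mk fun k =>
    (1/2 : ℚ) * (2 * k + 1) * (H1 (m + 1) k : ℚ) + (1/2 : ℚ) * (H1 m k : ℚ)
  have hF : 2 * F = 2 * (X * d⁄dX ℚ A) + A + mk fun k => (H1 m k : ℚ) := by
    ext k
    simp only [← map_ofNat C, one_div, coeff_C_mul, coeff_mk, map_add, coeff_X_mul_derivative,
      F, A]
    ring
  have hA := mk_H1_mul_one_sub_pow ℚ (m + 1)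
  have hB := mk_H1_mul_one_sub_pow ℚ m
  have hXA := X_mul_derivative_mul_one_sub_pow hA
  rw [derivative_pow, Nat.add_sub_cancel, map_add, derivative_one, derivative_X] at hXA
  have key : (mk fun k => H2.eval (k : ℚ)) * (2 * (1 - X) ^ (m + 3))
      = F * (2 * (1 - X) ^ (m + 3)) := by
    push_cast at hH2 hXA
    linear_combination
      2 * hH2 - (1 - X) ^ (m + 3) * hF - 2 * hXA - (1 - X) * hA - (1 - X) ^ 2 * hB
  have hunit : IsUnit (2 * (1 - X : ℚ⟦X⟧) ^ (m + 3)) := by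
    rw [isUnit_iff_constantCoeff, map_mul, map_pow, map_sub, map_one, constantCoeff_X, map_ofNat]
    norm_num
  intro k
  simpa [F] using congrArg (coeff k) (hunit.mul_left_inj.mp key)
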